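/- arXiv:0911.4729 — 3 statements merged into one kernel-verified Lean document; each statement's English description precedes it below -/
import Mathlib

section
/- Let L be an N×N real matrix, suppose c² = 2, and suppose v ∈ ℝᴺ is a nonzero vector with Lv = 2v. Let M = [[2I − c²L, −I], [I, 0]]. Then M(−v, v)ᵀ = −(−v, v)ᵀ and (M + I)(v, v)ᵀ = 2(−v, v)ᵀ; in particular (M + I)²(v, v)ᵀ = 0 while (M + I)(v, v)ᵀ ≠ 0, so (v, v)ᵀ is a generalized eigenvector of M for the eigenvalue −1 that is not an eigenvector, and the eigenvalue −1 of M is defective. -/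
/-- In the boundary case `c² = 2` with `Lv = 2v`, `v ≠ 0`: for
`M = [[2I − c²L, −I], [I, 0]]`, the vector `(−v, v)` is an eigenvector for eigenvalue `−1`,
`(M + I)(v, v) = 2(−v, v)`, and `(M + I)²(v, v) = 0` while `(M + I)(v, v) ≠ 0`; so `(v, v)`
is a generalized eigenvector of `M` for the eigenvalue `−1` that is not an eigenvector, and
`−1` is a defective eigenvalue of `M`. -/
theorem stmt_10 (N : ℕ) (L : Matrix (Fin N) (Fin N) ℝ) (c : ℝ) (hc : c ^ 2 = 2)
    (v : Fin N → ℝ) (hv : v ≠ 0) (hLv : L.mulVec v = (2 : ℝ) • v)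
    (M : Matrix (Fin N ⊕ Fin N) (Fin N ⊕ Fin N) ℝ)
    (hM : M = Matrix.fromBlocks ((2 : Matrix (Fin N) (Fin N) ℝ) - c ^ 2 • L) (-1) 1 0) :
    M.mulVec (Sum.elim (-v) v) = -(Sum.elim (-v) v) ∧
    (M + 1).mulVec (Sum.elim v v) = (2 : ℝ) • Sum.elim (-v) v ∧
    ((M + 1) * (M + 1)).mulVec (Sum.elim v v) = 0 ∧
    (M + 1).mulVec (Sum.elim v v) ≠ 0 := by
  subst hM
  rw [hc]
  set A := Matrix.fromBlocks ((2 : Matrix (Fin N) (Fin N) ℝ) - (2:ℝ) • L)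
      (-1 : Matrix (Fin N) (Fin N) ℝ) (1 : Matrix (Fin N) (Fin N) ℝ)
      (0 : Matrix (Fin N) (Fin N) ℝ) with hA
  have h1 : A.mulVec (Sum.elim (-v) v) = -(Sum.elim (-v) v) := by
    rw [hA, Matrix.fromBlocks_mulVec]
    simp only [Sum.elim_comp_inl, Sum.elim_comp_inr, Matrix.sub_mulVec, Matrix.smul_mulVec,
      Matrix.mulVec_neg, hLv, Matrix.neg_mulVec, Matrix.one_mulVec, Matrix.zero_mulVec]
    rw [Matrix.ofNat_mulVec]
    funext i
    cases i <;> simp [two_smul]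
  have h2' : (A + 1).mulVec (Sum.elim v v) = (2 : ℝ) • Sum.elim (-v) v := by
    rw [Matrix.add_mulVec, hA, Matrix.fromBlocks_mulVec]
    simp only [Sum.elim_comp_inl, Sum.elim_comp_inr, Matrix.sub_mulVec, Matrix.smul_mulVec,
      Matrix.mulVec_neg, hLv, Matrix.neg_mulVec, Matrix.one_mulVec, Matrix.zero_mulVec]
    rw [Matrix.ofNat_mulVec]
    funext i
    cases i <;> simp [two_smul] <;> ring
  refine ⟨h1, h2', ?_, ?_⟩
  · rw [← Matrix.mulVec_mulVec, h2', Matrix.mulVec_smul, Matrix.add_mulVec, h1,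
      Matrix.one_mulVec]
    simp
  · rw [h2']
    intro h
    apply hv
    funext i
    have := congrFun h (Sum.inr i)
    simpa using this
end

section
/- (Stability of the wave-equation iteration.) Let W be an N×N real symmetric matrix with nonnegative entries such that each row sum dᵢ = Σⱼ W_{ij} is positive, let L = I − D⁻¹W be the normalized graph Laplacian, and let c be a real constant with 0 < c < √2. For any u₀ ∈ ℝᴺ, define z(0) = (u₀, u₀)ᵀ ∈ ℝ²ᴺ and z(t) = Mᵗ z(0) where M = [[2I − c²L, −I], [I, 0]]. Then the trajectory is bounded: there exists a constant C such that ‖z(t)‖ ≤ C for all t ≥ 0. -/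
/-!
The normalized Laplacian `L = 1 - D⁻¹W` is similar, via `D^(-1/2)`, to the symmetric matrix
`D^(-1/2) (D - W) D^(-1/2)`, whose quadratic form lies between `0` and `2‖x‖²` because
`|xᵀWx| ≤ xᵀDx`. So `B = 2 - c²L` is diagonalizable with eigenvalues `a ∈ (-2, 2]` once `c² < 2`,
and in an eigenbasis the iteration splits into scalar recursions `s(t+1) = a s(t) - s(t-1)`,
`s(-1) = s(0)`, each bounded by conservation of the energy `s(t+1)² - a s(t+1) s(t) + s(t)²`.
-/

open Matrix Set Bornology

section WaveOrbit

variable {n R : Type*} [Fintype n] [CommRing R]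

/-- `u(t)` for `u(t+1) = B u(t) - u(t-1)` with `u(-1) = u(0) = x`. -/
def waveOrbit (B : Matrix n n R) (x : n → R) : ℕ → n → R
  | 0 => x
  | 1 => B *ᵥ x - x
  | t + 2 => B *ᵥ waveOrbit B x (t + 1) - waveOrbit B x t

theorem waveOrbit_succ (B : Matrix n n R) (x : n → R) (t : ℕ) :
    waveOrbit B x (t + 1) = B *ᵥ waveOrbit B x t - waveOrbit B x (t - 1) := by
  cases t <;> rfl

-- At `t = 0` the truncated `t - 1` is `0`, which matches `u(-1) = u(0)`.
theorem fromBlocks_pow_mulVec_sum_elim [DecidableEq n] (B : Matrix n n R) (x : n → R) (t : ℕ) :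
    fromBlocks B (-1) 1 0 ^ t *ᵥ Sum.elim x x =
      Sum.elim (waveOrbit B x t) (waveOrbit B x (t - 1)) := by
  induction t with
  | zero => simp [waveOrbit]
  | succ t ih =>
    rw [pow_succ', ← mulVec_mulVec, ih, fromBlocks_mulVec, waveOrbit_succ]
    simp [neg_mulVec, sub_eq_add_neg]

theorem mulVec_waveOrbit {B S P : Matrix n n R} (h : P * B = S * P) (x : n → R) :
    ∀ t, P *ᵥ waveOrbit B x t = waveOrbit S (P *ᵥ x) t
  | 0 => rfl
  | 1 => by simp only [waveOrbit, mulVec_sub, mulVec_mulVec, h]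
  | t + 2 => by
    rw [waveOrbit, waveOrbit, mulVec_sub, mulVec_mulVec, h, ← mulVec_mulVec,
      mulVec_waveOrbit h x t, mulVec_waveOrbit h x (t + 1)]

end WaveOrbit

theorem mul_sq_le_of_wave_recurrence {a : ℝ} (ha : -2 < a) (ha' : a ≤ 2) {s : ℕ → ℝ}
    (h1 : s 1 = a * s 0 - s 0) (h : ∀ t, s (t + 2) = a * s (t + 1) - s t) (t : ℕ) :
    (2 + a) * s t ^ 2 ≤ 4 * s 0 ^ 2 := by
  have energy : ∀ t, s (t + 1) ^ 2 - a * s (t + 1) * s t + s t ^ 2 = (2 - a) * s 0 ^ 2 := by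
    intro t
    induction t with
    | zero => rw [h1]; ring
    | succ t ih => rw [h t]; linear_combination ih
  -- The energy dominates `(1 - a²/4) s(t+1)²`; when `a = 2` it is `(s(t+1) - s t)²`.
  rcases ha'.lt_or_eq with ha' | rfl
  · cases t with
    | zero => nlinarith [sq_nonneg (s 0)]
    | succ t =>
      have : (2 - a) * ((2 + a) * s (t + 1) ^ 2) ≤ (2 - a) * (4 * s 0 ^ 2) := by
        nlinarith [energy t, sq_nonneg (2 * s t - a * s (t + 1))]
      exact le_of_mul_le_mul_left this (by linarith)
  · have hconst : ∀ t, s t = s 0 := by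
      intro t
      induction t with
      | zero => rfl
      | succ t ih =>
        have : (s (t + 1) - s t) ^ 2 = 0 := by linear_combination energy t
        exact (sub_eq_zero.mp (pow_eq_zero_iff two_ne_zero |>.mp this)).trans ih
    rw [hconst t]
    norm_num

section RealMatrix

variable {n : Type*} [Fintype n] [DecidableEq n]

theorem isBounded_range_waveOrbit_diagonal {a : n → ℝ} (ha : ∀ k, -2 < a k ∧ a k ≤ 2)
    (x : n → ℝ) : IsBounded (range (waveOrbit (diagonal a) x)) := by
  refine forall_isBounded_image_eval_iff.mp fun k => ?_
  rw [← range_comp, isBounded_iff_forall_norm_le]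
  refine ⟨√(4 * x k ^ 2 / (2 + a k)), forall_mem_range.mpr fun t => ?_⟩
  have hrec : ∀ t, waveOrbit (diagonal a) x (t + 2) k =
      a k * waveOrbit (diagonal a) x (t + 1) k - waveOrbit (diagonal a) x t k := fun t => by
    simp [waveOrbit, mulVec_diagonal]
  have hbound := mul_sq_le_of_wave_recurrence (ha k).1 (ha k).2
    (s := fun t => waveOrbit (diagonal a) x t k) (by simp [waveOrbit, mulVec_diagonal]) hrec t
  exact Real.abs_le_sqrt <| (le_div_iff₀' (by linarith [(ha k).1])).mpr hbound

theorem isBounded_range_waveOrbit_of_mul_eq_mul_diagonal {B P Q : Matrix n n ℝ} {a : n → ℝ}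
    (hPQ : P * Q = 1) (hBP : B * P = P * diagonal a) (ha : ∀ k, -2 < a k ∧ a k ≤ 2)
    (x : n → ℝ) : IsBounded (range (waveOrbit B x)) := by
  have hx : P *ᵥ (Q *ᵥ x) = x := by rw [mulVec_mulVec, hPQ, one_mulVec]
  have horbit : waveOrbit B x = (P *ᵥ ·) ∘ waveOrbit (diagonal a) (Q *ᵥ x) := by
    ext1 t
    rw [Function.comp_apply, mulVec_waveOrbit hBP.symm, hx]
  rw [horbit, range_comp]
  exact (LinearMap.toContinuousLinearMap (mulVecLin P)).lipschitz.isBounded_image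
    (isBounded_range_waveOrbit_diagonal ha _)

theorem Matrix.IsHermitian.eigenvalues_mem_Icc {A : Matrix n n ℝ} (hA : A.IsHermitian)
    {lo hi : ℝ} (h : ∀ x, lo * (x ⬝ᵥ x) ≤ x ⬝ᵥ (A *ᵥ x) ∧ x ⬝ᵥ (A *ᵥ x) ≤ hi * (x ⬝ᵥ x))
    (k : n) : hA.eigenvalues k ∈ Icc lo hi := by
  set v := hA.eigenvectorBasis k
  have hv : ⇑v ⬝ᵥ ⇑v = 1 := by
    have := real_inner_self_eq_norm_sq v
    rw [hA.eigenvectorBasis.orthonormal.1 k, EuclideanSpace.inner_eq_star_dotProduct] at this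
    simpa using this
  have he : hA.eigenvalues k = ⇑v ⬝ᵥ (A *ᵥ ⇑v) := by simpa using hA.eigenvalues_eq k
  simpa [he, hv] using h v

theorem Matrix.IsHermitian.exists_mul_eq_mul_diagonal {A : Matrix n n ℝ} (hA : A.IsHermitian) :
    ∃ U V : Matrix n n ℝ, U * V = 1 ∧ A * U = U * diagonal hA.eigenvalues := by
  set U : Matrix n n ℝ := (hA.eigenvectorUnitary : Matrix n n ℝ)
  have hspec : A = U * diagonal hA.eigenvalues * star U := by simpa using hA.spectral_theorem
  refine ⟨U, star U, Unitary.coe_mul_star_self _, ?_⟩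
  calc A * U = U * diagonal hA.eigenvalues * (star U * U) := by
        conv_lhs => rw [hspec]
        simp only [mul_assoc]
    _ = U * diagonal hA.eigenvalues := by rw [Unitary.coe_star_mul_self, mul_one]

section Graph

variable {W : Matrix n n ℝ} {d : n → ℝ}

theorem sum_sum_mul_add_mul_sq (hW : W.IsSymm) (hd : ∀ i, d i = ∑ j, W i j) (σ : ℝ)
    (y : n → ℝ) : ∑ i, ∑ j, W i j * (y i + σ * y j) ^ 2 =
      (1 + σ ^ 2) * (y ⬝ᵥ (diagonal d *ᵥ y)) + 2 * σ * (y ⬝ᵥ (W *ᵥ y)) := by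
  have hswap : ∑ i, ∑ j, W i j * y j ^ 2 = ∑ i, ∑ j, W i j * y i ^ 2 := by
    rw [Finset.sum_comm]
    simp_rw [hW.apply]
  have hexpand : ∀ i j, W i j * (y i + σ * y j) ^ 2 =
      W i j * y i ^ 2 + σ ^ 2 * (W i j * y j ^ 2) + 2 * σ * (y i * (W i j * y j)) :=
    fun i j => by ring
  have hDy : y ⬝ᵥ (diagonal d *ᵥ y) = ∑ i, ∑ j, W i j * y i ^ 2 := by
    refine Finset.sum_congr rfl fun i _ => ?_
    rw [mulVec_diagonal, hd, Finset.sum_mul, Finset.mul_sum]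
    exact Finset.sum_congr rfl fun j _ => by ring
  have hWy : y ⬝ᵥ (W *ᵥ y) = ∑ i, ∑ j, y i * (W i j * y j) := by
    simp only [dotProduct, mulVec, Finset.mul_sum]
  rw [hDy, hWy]
  simp only [hexpand, Finset.sum_add_distrib, ← Finset.mul_sum, hswap]
  ring

theorem abs_dotProduct_mulVec_le (hW : W.IsSymm) (hW0 : ∀ i j, 0 ≤ W i j)
    (hd : ∀ i, d i = ∑ j, W i j) (y : n → ℝ) :
    |y ⬝ᵥ (W *ᵥ y)| ≤ y ⬝ᵥ (diagonal d *ᵥ y) := by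
  have hnonneg : ∀ σ, 0 ≤ ∑ i, ∑ j, W i j * (y i + σ * y j) ^ 2 := fun σ =>
    Finset.sum_nonneg fun i _ => Finset.sum_nonneg fun j _ => mul_nonneg (hW0 i j) (sq_nonneg _)
  have hplus := sum_sum_mul_add_mul_sq hW hd 1 y
  have hminus := sum_sum_mul_add_mul_sq hW hd (-1) y
  rw [abs_le]
  constructor <;> nlinarith [hnonneg 1, hnonneg (-1)]

-- For `e = d^(-1/2)`: the random-walk Laplacian is similar to the symmetric normalized one.
theorem one_sub_inv_diagonal_mul_mul_diagonal {e : n → ℝ} (he : ∀ i, e i ^ 2 * d i = 1) :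
    (1 - (diagonal d)⁻¹ * W) * diagonal e =
      diagonal e * (diagonal e * (diagonal d - W) * diagonal e) := by
  have hEED : diagonal e * diagonal e * diagonal d = 1 := by
    rw [diagonal_mul_diagonal, diagonal_mul_diagonal, ← diagonal_one]
    exact congrArg diagonal (funext fun i => by rw [← he i]; ring)
  rw [inv_eq_left_inv hEED]
  simp only [sub_mul, mul_sub, one_mul, ← mul_assoc, hEED]

theorem exists_mul_eq_mul_diagonal_one_sub_inv_diagonal_mul (hW : W.IsSymm)
    (hW0 : ∀ i j, 0 ≤ W i j) (hd : ∀ i, d i = ∑ j, W i j) (hdpos : ∀ i, 0 < d i) :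
    ∃ P Q : Matrix n n ℝ, ∃ μ : n → ℝ, P * Q = 1 ∧
      (1 - (diagonal d)⁻¹ * W) * P = P * diagonal μ ∧ ∀ k, μ k ∈ Icc 0 2 := by
  set e : n → ℝ := fun i => (√(d i))⁻¹
  have he : ∀ i, e i ^ 2 * d i = 1 := fun i => by
    simp [e, inv_pow, Real.sq_sqrt (hdpos i).le, (hdpos i).ne']
  set A := diagonal e * (diagonal d - W) * diagonal e
  have hA : A.IsHermitian := by
    have hDW : (diagonal d - W).IsHermitian :=
      (isHermitian_diagonal d).sub (by rwa [IsHermitian, conjTranspose_eq_transpose_of_trivial])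
    simpa using isHermitian_conjTranspose_mul_mul (diagonal e) hDW
  obtain ⟨U, V, hUV, hAU⟩ := hA.exists_mul_eq_mul_diagonal
  refine ⟨diagonal e * U, V * diagonal fun i => √(d i), hA.eigenvalues, ?_, ?_,
    hA.eigenvalues_mem_Icc fun x => ?_⟩
  · rw [mul_assoc, ← mul_assoc U, hUV, one_mul, diagonal_mul_diagonal, ← diagonal_one]
    exact congrArg diagonal (funext fun i => inv_mul_cancel₀ (Real.sqrt_pos.mpr (hdpos i)).ne')
  · rw [← mul_assoc, one_sub_inv_diagonal_mul_mul_diagonal he, mul_assoc, hAU, mul_assoc]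
  · set y := diagonal e *ᵥ x
    have hxy : x ᵥ* diagonal e = y := by
      ext i; simp [y, vecMul_diagonal, mulVec_diagonal, mul_comm]
    have hquad : x ⬝ᵥ (A *ᵥ x) = y ⬝ᵥ (diagonal d *ᵥ y) - y ⬝ᵥ (W *ᵥ y) := by
      rw [← mulVec_mulVec, ← mulVec_mulVec, dotProduct_mulVec, hxy, sub_mulVec, dotProduct_sub]
    have hx : x ⬝ᵥ x = y ⬝ᵥ (diagonal d *ᵥ y) := by
      refine Finset.sum_congr rfl fun i _ => ?_
      simp only [y, mulVec_diagonal]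
      linear_combination (x i) ^ 2 * (he i).symm
    have := abs_le.mp (abs_dotProduct_mulVec_le hW hW0 hd y)
    constructor <;> linarith

end Graph

end RealMatrix

/-- Stability of the wave-equation iteration: for the normalized Laplacian `L = I − D⁻¹W`
of a weighted graph and wave speed `0 < c < √2`, the trajectory `z(t) = Mᵗ(u₀, u₀)` of
`M = [[2I − c²L, −I], [I, 0]]` is bounded. -/
theorem stmt_11 (N : ℕ) (W : Matrix (Fin N) (Fin N) ℝ)
    (hsymm : W.IsSymm) (hnonneg : ∀ i j, 0 ≤ W i j)
    (d : Fin N → ℝ) (hd : ∀ i, d i = ∑ j, W i j) (hdpos : ∀ i, 0 < d i)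
    (c : ℝ) (hc0 : 0 < c) (hc2 : c < Real.sqrt 2) (u₀ : Fin N → ℝ)
    (M : Matrix (Fin N ⊕ Fin N) (Fin N ⊕ Fin N) ℝ)
    (hM : M = Matrix.fromBlocks
      ((2 : Matrix (Fin N) (Fin N) ℝ) -
        c ^ 2 • ((1 : Matrix (Fin N) (Fin N) ℝ) - (Matrix.diagonal d)⁻¹ * W)) (-1) 1 0) :
    ∃ C : ℝ, ∀ t : ℕ, ‖(M ^ t).mulVec (Sum.elim u₀ u₀)‖ ≤ C := by
  subst hM
  have hc : c ^ 2 < 2 := by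
    nlinarith [Real.sq_sqrt (show (0 : ℝ) ≤ 2 by norm_num), Real.sqrt_nonneg 2]
  obtain ⟨P, Q, μ, hPQ, hLP, hμ⟩ :=
    exists_mul_eq_mul_diagonal_one_sub_inv_diagonal_mul hsymm hnonneg hd hdpos
  have hBP : (2 - c ^ 2 • (1 - (diagonal d)⁻¹ * W)) * P =
      P * diagonal fun k => 2 - c ^ 2 * μ k := by
    have hdiag : (diagonal fun k => 2 - c ^ 2 * μ k) = 2 - c ^ 2 • diagonal μ := by
      rw [← diagonal_ofNat, ← diagonal_smul, ← diagonal_sub]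
      rfl
    rw [hdiag, sub_mul, mul_sub, smul_mul_assoc, mul_smul_comm, hLP, two_mul, mul_two]
  have hbdd := isBounded_range_waveOrbit_of_mul_eq_mul_diagonal hPQ hBP
    (fun k => ⟨by nlinarith [(hμ k).2], by nlinarith [(hμ k).1]⟩) u₀
  obtain ⟨C, hC⟩ := isBounded_iff_forall_norm_le.mp hbdd
  refine ⟨C, fun t => ?_⟩
  rw [fromBlocks_pow_mulVec_sum_elim,
    pi_norm_le_iff_of_nonneg ((norm_nonneg _).trans (hC _ ⟨0, rfl⟩))]
  rintro (i | i)
  · exact (norm_le_pi_norm _ i).trans (hC _ ⟨t, rfl⟩)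
  · exact (norm_le_pi_norm _ i).trans (hC _ ⟨t - 1, rfl⟩)
end

section
/- Fix a real constant c with 0 < c < √2. Then lim_{τ→∞} √τ · arccos((2 + c²(e^{−1/τ} − 1))/2) = c. Consequently, the convergence time T_max = η / arccos((2 + c²(e^{−1/τ} − 1))/2) of the wave-equation algorithm grows like η√τ/c as the mixing time τ → ∞. -/
/-!
Since `cos θ = 1 - θ²/2 + O(θ⁴)`, one has `arccos (1 - u) ~ √(2u)` as `u → 0⁺`; more precisely
`arccos x / √(1 - x²) = θ / sin θ → 1` as `x → 1⁻`, with `θ = arccos x`. Here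
`x = 1 - u` with `u = c² (1 - e^{-1/τ}) / 2`, and `τ (1 - e^{-1/τ}) → 1` is the derivative of
`exp` at `0`, so `2τu → c²` and `√τ · arccos x ~ √(2τu) → c`. The statement about `T_max`
follows by dividing.
-/

open Filter Topology Real

theorem tendsto_neg_one_div_atTop_nhdsLT_zero :
    Tendsto (fun τ : ℝ => -1 / τ) atTop (𝓝[<] 0) := by
  simpa [Function.comp_def, neg_div] using
    (tendsto_neg_nhdsGT (a := (0 : ℝ))).comp tendsto_inv_atTop_nhdsGT_zero

theorem tendsto_mul_one_sub_exp_neg_one_div :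
    Tendsto (fun τ : ℝ => τ * (1 - exp (-1 / τ))) atTop (𝓝 1) := by
  have hslope := (hasDerivAt_exp 0).tendsto_slope_zero_left.comp
    tendsto_neg_one_div_atTop_nhdsLT_zero
  rw [exp_zero] at hslope
  refine hslope.congr fun τ => ?_
  simp only [Function.comp_apply, smul_eq_mul, zero_add, inv_div]
  ring

theorem tendsto_arccos_div_sqrt_one_sub_sq :
    Tendsto (fun x => arccos x / √(1 - x ^ 2)) (𝓝[<] 1) (𝓝 1) := by
  have hcont : Tendsto (fun x => (sinc (arccos x))⁻¹) (𝓝 1) (𝓝 1) := by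
    simpa using ((continuous_sinc.comp continuous_arccos).tendsto 1).inv₀ (by simp)
  refine (hcont.mono_left nhdsWithin_le_nhds).congr' ?_
  filter_upwards [self_mem_nhdsWithin] with x hx
  rw [sinc_of_ne_zero (arccos_pos.2 hx).ne', sin_arccos, inv_div]

theorem tendsto_sqrt_mul_arccos {α : Type*} {l : Filter α} {t x : α → ℝ} {c : ℝ} (hc : 0 ≤ c)
    (hx : Tendsto x l (𝓝[<] 1)) (ht : Tendsto (fun a => 2 * t a * (1 - x a)) l (𝓝 (c ^ 2))) :
    Tendsto (fun a => √(t a) * arccos (x a)) l (𝓝 c) := by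
  have hx1 : Tendsto x l (𝓝 1) := tendsto_nhds_of_tendsto_nhdsWithin hx
  have hsq : Tendsto (fun a => t a * (1 - x a ^ 2)) l (𝓝 (c ^ 2)) := by
    have := ht.mul (((tendsto_const_nhds (x := (1 : ℝ))).add hx1).div_const 2)
    refine (by simpa using this : Tendsto _ l (𝓝 (c ^ 2))).congr fun a => ?_
    ring
  have hroot : Tendsto (fun a => √(t a * (1 - x a ^ 2))) l (𝓝 c) := by
    simpa [sqrt_sq hc] using hsq.sqrt
  simpa using (hroot.mul (tendsto_arccos_div_sqrt_one_sub_sq.comp hx)).congr' <| by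
    filter_upwards [hx.eventually self_mem_nhdsWithin,
      hx1.eventually (eventually_gt_nhds (by norm_num : (-1 : ℝ) < 1))] with a hlt hgt
    have hpos : 0 < 1 - x a ^ 2 := by nlinarith [show x a < 1 from hlt]
    rw [Function.comp_apply, sqrt_mul' _ hpos.le]
    field_simp [(sqrt_pos.2 hpos).ne']

theorem stmt_16_general (c : ℝ) (hc0 : 0 < c) :
    Tendsto (fun τ : ℝ =>
        Real.sqrt τ * Real.arccos ((2 + c ^ 2 * (Real.exp (-1 / τ) - 1)) / 2))
      atTop (nhds c) ∧
    ∀ η : ℝ, 0 < η →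
      Tendsto (fun τ : ℝ =>
          (η / Real.arccos ((2 + c ^ 2 * (Real.exp (-1 / τ) - 1)) / 2)) / Real.sqrt τ)
        atTop (nhds (η / c)) := by
  have hexp : Tendsto (fun τ : ℝ => exp (-1 / τ)) atTop (𝓝 1) := by
    simpa only [Function.comp_def, exp_zero] using (continuous_exp.tendsto 0).comp
      (tendsto_nhds_of_tendsto_nhdsWithin tendsto_neg_one_div_atTop_nhdsLT_zero)
  have hx : Tendsto (fun τ : ℝ => (2 + c ^ 2 * (exp (-1 / τ) - 1)) / 2) atTop (𝓝[<] 1) := by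
    refine tendsto_nhdsWithin_iff.2 ⟨?_, ?_⟩
    · simpa using (((hexp.sub_const 1).const_mul (c ^ 2)).const_add 2).div_const 2
    · filter_upwards [tendsto_neg_one_div_atTop_nhdsLT_zero.eventually self_mem_nhdsWithin]
        with τ hτ
      have : exp (-1 / τ) < 1 := Real.exp_lt_one_iff.2 hτ
      simp only [Set.mem_Iio]
      nlinarith [sq_pos_of_pos hc0]
  have hlim := tendsto_sqrt_mul_arccos (t := fun τ => τ) hc0.le hx <| by
    simpa using (tendsto_mul_one_sub_exp_neg_one_div.const_mul (c ^ 2)).congr fun τ => by ring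
  refine ⟨hlim, fun η _ => ?_⟩
  refine ((tendsto_const_nhds (x := η)).div hlim hc0.ne').congr fun τ => ?_
  simp only [Pi.div_apply, div_div, mul_comm]

/-- For fixed `0 < c < √2`, `√τ · arccos((2 + c²(e^{−1/τ} − 1))/2) → c` as the mixing time
`τ → ∞`; consequently the convergence time `T_max = η / arccos((2 + c²(e^{−1/τ} − 1))/2)` of
the wave-equation algorithm grows like `η√τ/c`. -/
theorem stmt_16 (c : ℝ) (hc0 : 0 < c) (hc2 : c < Real.sqrt 2) :
    Tendsto (fun τ : ℝ =>
        Real.sqrt τ * Real.arccos ((2 + c ^ 2 * (Real.exp (-1 / τ) - 1)) / 2))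
      atTop (nhds c) ∧
    ∀ η : ℝ, 0 < η →
      Tendsto (fun τ : ℝ =>
          (η / Real.arccos ((2 + c ^ 2 * (Real.exp (-1 / τ) - 1)) / 2)) / Real.sqrt τ)
        atTop (nhds (η / c)) :=
  stmt_16_general c hc0
end
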